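/- Let w be an N×N permutation matrix, identified with the permutation w of {1,…,N} via w e_i = e_{w(i)}. The flag of w lies in the Springer fiber S_X if and only if w^{-1}(1) < w^{-1}(2) < ⋯ < w^{-1}(n) and w^{-1}(n+1) < w^{-1}(n+2) < ⋯ < w^{-1}(N). Moreover, if g is an invertible matrix in canonical form whose flag lies in S_X and w is the permutation matrix whose nonzero entries are in the positions of the pivots of g, then the flag of w also lies in S_X. -/

import Mathlib

attribute [local instance] Classical.propDecidable

noncomputable section

namespace TwoRowSpringer

/-- An arc is a pair `(init, term)` of natural numbers (with `init < term` in matchings). -/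
abbrev Arc : Type := ℕ × ℕ

/-- A matching on `{1,…,N}`: a finite set of arcs with `init < term`, endpoints in `[1,N]`,
and all `2|M|` endpoints distinct. -/
def IsMatching (N : ℕ) (M : Finset Arc) : Prop :=
  (∀ a ∈ M, a.1 < a.2 ∧ 1 ≤ a.1 ∧ a.2 ≤ N) ∧
  (∀ a ∈ M, ∀ b ∈ M, a ≠ b →
    a.1 ≠ b.1 ∧ a.1 ≠ b.2 ∧ a.2 ≠ b.1 ∧ a.2 ≠ b.2)

/-- `a` and `b` cross: `init b < init a < term b < term a`. -/
def Crosses (a b : Arc) : Prop := b.1 < a.1 ∧ a.1 < b.2 ∧ b.2 < a.2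

def IsNoncrossing (M : Finset Arc) : Prop := ∀ a ∈ M, ∀ b ∈ M, ¬ Crosses a b

/-- Standard: every integer strictly under an arc is an endpoint of some arc. -/
def IsStandard (M : Finset Arc) : Prop :=
  ∀ a ∈ M, ∀ i : ℕ, a.1 < i → i < a.2 → ∃ b ∈ M, i = b.1 ∨ i = b.2

/-- `b` is nested above `a`. -/
def NestedAbove (b a : Arc) : Prop := b.1 < a.1 ∧ a.2 < b.2

/-- `b` is the parent of `a` in `M`: nested immediately above `a`. -/
def IsParent (M : Finset Arc) (b a : Arc) : Prop :=
  b ∈ M ∧ NestedAbove b a ∧ ∀ c ∈ M, ¬ (b.1 < c.1 ∧ c.1 < a.1 ∧ a.2 < c.2)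

/-- The ancestor function: the parent if it exists, otherwise `0 = (0,0)`;
note `anc M (0,0) = (0,0)`. -/
def anc (M : Finset Arc) (a : Arc) : Arc :=
  if h : ∃ b, IsParent M b a then h.choose else (0, 0)

/-- The ancestors of `a`: `a`, its parent, the parent of its parent, and so on. -/
def ancestors (M : Finset Arc) (a : Arc) : Set Arc :=
  {b | b ≠ (0, 0) ∧ ∃ k : ℕ, (anc M)^[k] a = b}

def startsArc (M : Finset Arc) (i : ℕ) : Prop := ∃ a ∈ M, a.1 = i

def endsArc (M : Finset Arc) (i : ℕ) : Prop := ∃ a ∈ M, a.2 = i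

def onArc (M : Finset Arc) (i : ℕ) : Prop := startsArc M i ∨ endsArc M i

/-- Number of `j` with `1 ≤ j ≤ i-1` starting an arc of `M`. -/
def Jbeg (M : Finset Arc) (i : ℕ) : ℕ :=
  ((Finset.Ico 1 i).filter fun j => startsArc M j).card

/-- Number of `j` with `1 ≤ j ≤ i-1` ending an arc of `M`. -/
def Jend (M : Finset Arc) (i : ℕ) : ℕ :=
  ((Finset.Ico 1 i).filter fun j => endsArc M j).card

/-- Number of `j` with `1 ≤ j ≤ i-1` on no arc of `M`. -/
def Jnot (M : Finset Arc) (i : ℕ) : ℕ :=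
  ((Finset.Ico 1 i).filter fun j => ¬ onArc M j).card

/-- The permutation `w_M` of `{1,…,N}` attached to a standard noncrossing matching `M`
(`n` is the size of the first Jordan block). -/
def wM (n : ℕ) (M : Finset Arc) (i : ℕ) : ℕ :=
  if startsArc M i then
    ((n : ℤ) + (Jbeg M i : ℤ) + min 0 ((Jnot M i : ℤ) - ((n - M.card : ℕ) : ℤ)) + 1).toNat
  else if endsArc M i then
    Jend M i + max (Jnot M i) (n - M.card) + 1
  else if Jnot M i ≤ n - M.card then
    Jend M i + Jnot M i + 1
  else
    n + Jbeg M i + (Jnot M i - (n - M.card)) + 1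

/-! ### Linear algebra -/

/-- The standard basis vector `e_i` of `ℂ^N` in 1-based indexing (zero if `i ∉ [1,N]`). -/
def eb (N : ℕ) (i : ℕ) : Fin N → ℂ := fun r => if (r : ℕ) + 1 = i then 1 else 0

/-- The nilpotent matrix of Jordan type `(n, N-n)`: `X e_i = e_{i-1}` for `i ∉ {1, n+1}`
(1-based) and `X e_1 = X e_{n+1} = 0`. -/
def Xmat (N n : ℕ) : Matrix (Fin N) (Fin N) ℂ :=
  Matrix.of fun r c => if (c : ℕ) = (r : ℕ) + 1 ∧ (c : ℕ) ≠ n then 1 else 0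

/-- Column `c` of `g` as a vector. -/
def col {N : ℕ} (g : Matrix (Fin N) (Fin N) ℂ) (c : Fin N) : Fin N → ℂ := fun r => g r c

/-- Span of the first `i` columns of `g` (1-based: columns `1,…,i`). -/
def spanCols {N : ℕ} (g : Matrix (Fin N) (Fin N) ℂ) (i : ℕ) : Submodule ℂ (Fin N → ℂ) :=
  Submodule.span ℂ {w | ∃ c : Fin N, (c : ℕ) < i ∧ w = col g c}

/-- The flag of `g` lies in the Springer fiber of `Xmat N n`. -/
def SpringerCond (N n : ℕ) (g : Matrix (Fin N) (Fin N) ℂ) : Prop :=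
  ∀ i : ℕ, ∀ v ∈ spanCols g i, (Xmat N n).mulVec v ∈ spanCols g i

/-- `g` is in canonical form with pivot of column `c` in row `σ c`: each pivot equals 1 and is
the lowest nonzero entry of its column, and entries to the right of a pivot vanish.  The pivots
form the permutation matrix of `σ`. -/
def CanonicalWithPerm {N : ℕ} (g : Matrix (Fin N) (Fin N) ℂ) (σ : Equiv.Perm (Fin N)) : Prop :=
  (∀ c, g (σ c) c = 1) ∧
  (∀ c r, σ c < r → g r c = 0) ∧
  (∀ c c' : Fin N, c < c' → g (σ c) c' = 0)

/-- The permutation matrix of `σ`. -/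
def permMat {N : ℕ} (σ : Equiv.Perm (Fin N)) : Matrix (Fin N) (Fin N) ℂ :=
  Matrix.of fun r c => if r = σ c then 1 else 0

/-- `r_0(α) = J_end(init α) + max{J_not(init α), n - k}`. -/
def r0 (n : ℕ) (M : Finset Arc) (a : Arc) : ℕ :=
  Jend M a.1 + max (Jnot M a.1) (n - M.card)

/-- Extend coordinates indexed by arcs of `M` by zero (this encodes `v₀ = 0`). -/
def extv (M : Finset Arc) (v : Arc → ℂ) : Arc → ℂ := fun a => if a ∈ M then v a else 0

/-- `ι_{α,M}(v) = Σ_{j ≥ 1} v_{anc^{j-1} α} e_{r₀(α)+j}`. -/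
def iota (N n : ℕ) (M : Finset Arc) (v : Arc → ℂ) (a : Arc) : Fin N → ℂ :=
  fun r => if r0 n M a ≤ (r : ℕ) then extv M v ((anc M)^[(r : ℕ) - r0 n M a] a) else 0

/-- The matrix `Im(v)`, whose column `init α` is `ι_{α,M}(v)` and whose other columns vanish. -/
def ImM (N n : ℕ) (M : Finset Arc) (v : Arc → ℂ) : Matrix (Fin N) (Fin N) ℂ :=
  Matrix.of fun r c =>
    if h : ∃ a ∈ M, a.1 = (c : ℕ) + 1 then iota N n M v h.choose r else 0

/-- The permutation matrix of `w_M`. -/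
def wMat (N n : ℕ) (M : Finset Arc) : Matrix (Fin N) (Fin N) ℂ :=
  Matrix.of fun r c => if (r : ℕ) + 1 = wM n M ((c : ℕ) + 1) then 1 else 0

/-- `f_M(v) = w_M + Im(v)`. -/
def fM (N n : ℕ) (M : Finset Arc) (v : Arc → ℂ) : Matrix (Fin N) (Fin N) ℂ :=
  wMat N n M + ImM N n M v

end TwoRowSpringer

/-!
For a matrix whose column `c` has its lowest nonzero entry in row `σ c`, the lowest nonzero
entry of any vector of `V_i` lies in the pivot row of one of the first `i` columns. If the flag
is `X`-stable and row `r` is not the top of a Jordan block, `X` moves the pivot of the column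
`σ⁻¹ r` one row up, to `r - 1`, while staying in `V_{σ⁻¹ r + 1}`; hence
`σ⁻¹ (r - 1) < σ⁻¹ r`, and these inequalities chain to monotonicity of `σ⁻¹` on each block.
Conversely, for a permutation flag `X` sends each basis column `e_{σ c}` to `0` or to
`e_{σ c - 1} = e_{σ c'}` with `c' < c`.
-/

open Matrix

namespace TwoRowSpringer

variable {N n : ℕ}

def HasPivots (g : Matrix (Fin N) (Fin N) ℂ) (σ : Equiv.Perm (Fin N)) : Prop :=
  (∀ c, g (σ c) c ≠ 0) ∧ ∀ c r, σ c < r → g r c = 0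

/-- In 1-based rows, `X e_{r+1} = e_{m+1}` exactly when `m + 1 = r ≠ n`. -/
def AscendsAlongX (n : ℕ) {α : Type*} [Preorder α] (f : Fin N → α) : Prop :=
  ∀ m r : Fin N, (m : ℕ) + 1 = r → (r : ℕ) ≠ n → f m < f r

theorem ascendsAlongX_iff {α : Type*} [Preorder α] (f : Fin N → α) :
    AscendsAlongX n f ↔
      ((∀ r r' : Fin N, r < r' → (r' : ℕ) < n → f r < f r') ∧
       (∀ r r' : Fin N, n ≤ (r : ℕ) → r < r' → f r < f r')) := by
  constructor
  · intro hf
    have hmono : ∀ s : Set (Fin N), s.OrdConnected →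
        (∀ a ∈ s, ∀ b ∈ s, (a : ℕ) + 1 = b → (b : ℕ) ≠ n) → StrictMonoOn f s := by
      refine fun s hs hsn => strictMonoOn_of_lt_succ hs fun a ha has hsa => ?_
      have hsucc : (a : ℕ) + 1 = Order.succ a := by
        simpa using Order.covBy_succ_of_not_isMax ha
      exact hf a _ hsucc (hsn a has _ hsa hsucc)
    refine ⟨fun r r' hrr' hr' => ?_, fun r r' hr hrr' => ?_⟩
    · refine hmono {r | (r : ℕ) < n} ⟨fun _ _ _ hb _ hx => (Fin.le_def.mp hx.2).trans_lt hb⟩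
        (fun _ _ _ hb _ => hb.ne) ((Fin.lt_def.mp hrr').trans hr') hr' hrr'
    · refine hmono {r | n ≤ (r : ℕ)} ⟨fun _ ha _ _ _ hx => ha.trans (Fin.le_def.mp hx.1)⟩
        (fun a (ha : n ≤ (a : ℕ)) _ _ hab => by omega) hr
        (hr.trans (Fin.le_def.mp hrr'.le)) hrr'
  · rintro ⟨hlow, hhigh⟩ m r hmr hr
    have hmr' : m < r := Fin.lt_def.mpr (by omega)
    rcases lt_or_ge (r : ℕ) n with h | h
    · exact hlow m r hmr' h
    · exact hhigh m r (by omega) hmr'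

theorem CanonicalWithPerm.hasPivots {g : Matrix (Fin N) (Fin N) ℂ} {σ : Equiv.Perm (Fin N)}
    (hg : CanonicalWithPerm g σ) : HasPivots g σ :=
  ⟨fun c => by simp [hg.1 c], hg.2.1⟩

theorem permMat_hasPivots (σ : Equiv.Perm (Fin N)) : HasPivots (permMat σ) σ :=
  ⟨fun c => by simp [permMat], fun _ _ h => if_neg h.ne'⟩

theorem col_permMat (σ : Equiv.Perm (Fin N)) (c : Fin N) :
    col (permMat σ) c = Pi.single (σ c) 1 := by
  ext r
  simp [col, permMat, Pi.single_apply]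

theorem col_mem_spanCols (g : Matrix (Fin N) (Fin N) ℂ) {c : Fin N} {i : ℕ}
    (hc : (c : ℕ) < i) : col g c ∈ spanCols g i :=
  Submodule.subset_span ⟨c, hc, rfl⟩

theorem spanCols_le_map_mulVecLin (g : Matrix (Fin N) (Fin N) ℂ) (i : ℕ) :
    spanCols g i ≤ (Submodule.pi {c : Fin N | i ≤ c} fun _ => ⊥).map g.mulVecLin := by
  refine Submodule.span_le.mpr ?_
  rintro _ ⟨c, hc, rfl⟩
  refine ⟨Pi.single c 1, fun c' hc' => ?_, ?_⟩
  · have : c' ≠ c := by rintro rfl; exact absurd hc' (by simpa using hc)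
    simp [this]
  · ext r
    simp [col]

theorem HasPivots.exists_lowest_nonzero_mulVec {g : Matrix (Fin N) (Fin N) ℂ}
    {σ : Equiv.Perm (Fin N)} (hg : HasPivots g σ) {μ : Fin N → ℂ} (hμ : μ ≠ 0) :
    ∃ c, μ c ≠ 0 ∧ (g *ᵥ μ) (σ c) ≠ 0 ∧ ∀ t, σ c < t → (g *ᵥ μ) t = 0 := by
  have hsupp : (Finset.univ.filter fun c => μ c ≠ 0).Nonempty := by
    obtain ⟨c, hc⟩ := Function.ne_iff.mp hμ
    exact ⟨c, by simpa using hc⟩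
  obtain ⟨c, hc, hmax⟩ := Finset.exists_max_image _ σ hsupp
  simp only [Finset.mem_filter, Finset.mem_univ, true_and] at hc hmax
  have hterm : ∀ t b, σ c < t ∨ (σ c = t ∧ b ≠ c) → g t b * μ b = 0 := by
    intro t b ht
    by_cases hb : μ b = 0
    · simp [hb]
    have hσb : σ b < t := by
      rcases ht with ht | ⟨rfl, hbc⟩
      · exact (hmax b hb).trans_lt ht
      · exact (hmax b hb).lt_of_ne (σ.injective.ne hbc)
    simp [hg.2 b t hσb]
  refine ⟨c, hc, ?_, fun t ht =>
    Finset.sum_eq_zero (s := .univ) fun b _ => hterm t b (.inl ht)⟩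
  rw [mulVec, dotProduct, Finset.sum_eq_single c (fun b _ hbc => hterm _ b (.inr ⟨rfl, hbc⟩))
    (by simp)]
  exact mul_ne_zero (hg.1 c) hc

theorem HasPivots.inv_lt_of_mem_spanCols {g : Matrix (Fin N) (Fin N) ℂ} {σ : Equiv.Perm (Fin N)}
    (hg : HasPivots g σ) {i : ℕ} {v : Fin N → ℂ} (hv : v ∈ spanCols g i) {m : Fin N}
    (hm : v m ≠ 0) (hbelow : ∀ t, m < t → v t = 0) : ((σ⁻¹ m : Fin N) : ℕ) < i := by
  obtain ⟨μ, hμ, rfl⟩ := spanCols_le_map_mulVecLin g i hv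
  obtain ⟨c, hc, hpiv, hzero⟩ :=
    hg.exists_lowest_nonzero_mulVec (μ := μ) (by rintro rfl; simp at hm)
  have hcm : σ c = m := by
    rcases lt_trichotomy (σ c) m with h | h | h
    · exact absurd (hzero m h) hm
    · exact h
    · exact absurd (hbelow _ h) hpiv
  rw [← hcm, Equiv.Perm.coe_inv, σ.symm_apply_apply]
  by_contra! hic
  exact hc (hμ c hic)

theorem Xmat_mulVec_apply_of_add_one_eq (v : Fin N → ℂ) {m r : Fin N} (hmr : (m : ℕ) + 1 = r)
    (hr : (r : ℕ) ≠ n) : (Xmat N n *ᵥ v) m = v r := by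
  rw [mulVec, dotProduct, Finset.sum_eq_single r]
  · simp [Xmat, hmr, hr]
  · intro s _ hs
    simp [Xmat, Fin.ext_iff] at hs ⊢
    omega
  · simp

theorem Xmat_mulVec_apply_eq_zero {v : Fin N → ℂ} {r t : Fin N} (hv : ∀ s, r < s → v s = 0)
    (hrt : r ≤ t) : (Xmat N n *ᵥ v) t = 0 := by
  rw [mulVec, dotProduct]
  refine Finset.sum_eq_zero fun s _ => ?_
  by_cases hs : (s : ℕ) = t + 1
  · rw [hv s (Fin.lt_def.mpr (by rw [Fin.le_def] at hrt; omega)), mul_zero]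
  · simp [Xmat, hs]

theorem Xmat_mulVec_single_of_add_one_eq {m r : Fin N} (hmr : (m : ℕ) + 1 = r)
    (hr : (r : ℕ) ≠ n) : Xmat N n *ᵥ Pi.single r 1 = Pi.single m 1 := by
  ext t
  rw [← hmr] at hr
  simp [Xmat, Pi.single_apply, Fin.ext_iff, ← hmr, Ne.symm hr, eq_comm]

theorem Xmat_mulVec_single_eq_zero {r : Fin N} (hr : (r : ℕ) = 0 ∨ (r : ℕ) = n) :
    Xmat N n *ᵥ Pi.single r 1 = 0 := by
  ext t
  simp [Xmat]
  omega

theorem HasPivots.ascendsAlongX {g : Matrix (Fin N) (Fin N) ℂ} {σ : Equiv.Perm (Fin N)}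
    (hg : HasPivots g σ) (hs : SpringerCond N n g) : AscendsAlongX n ⇑σ⁻¹ := by
  intro m r hmr hr
  set c := σ⁻¹ r
  have hσc : σ c = r := σ.apply_symm_apply r
  have hXc := hs _ _ (col_mem_spanCols g (Nat.lt_succ_self c))
  have hlt := hg.inv_lt_of_mem_spanCols hXc (m := m)
    (by rw [Xmat_mulVec_apply_of_add_one_eq _ hmr hr, ← hσc]; exact hg.1 c)
    (fun t hmt => Xmat_mulVec_apply_eq_zero (fun s hs => hg.2 c s (hσc ▸ hs))
      (Fin.le_def.mpr (by rw [Fin.lt_def] at hmt; omega)))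
  have hne : σ⁻¹ m ≠ c := σ⁻¹.injective.ne (by rintro rfl; omega)
  exact lt_of_le_of_ne (Fin.le_def.mpr (by omega)) hne

theorem springerCond_of_forall_col {g : Matrix (Fin N) (Fin N) ℂ}
    (h : ∀ (c : Fin N) (i : ℕ), (c : ℕ) < i → Xmat N n *ᵥ col g c ∈ spanCols g i) :
    SpringerCond N n g :=
  fun i _ hv => (Submodule.span_le (p := (spanCols g i).comap (Xmat N n).mulVecLin)).mpr
    (by rintro _ ⟨c, hc, rfl⟩; exact h c i hc) hv

theorem springerCond_permMat_iff (σ : Equiv.Perm (Fin N)) :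
    SpringerCond N n (permMat σ) ↔ AscendsAlongX n ⇑σ⁻¹ := by
  refine ⟨(permMat_hasPivots σ).ascendsAlongX, fun hσ => springerCond_of_forall_col ?_⟩
  intro c i hci
  rw [col_permMat]
  by_cases hr : (σ c : ℕ) = 0 ∨ (σ c : ℕ) = n
  · rw [Xmat_mulVec_single_eq_zero hr]
    exact zero_mem _
  rw [not_or] at hr
  set m : Fin N := ⟨σ c - 1, by omega⟩
  have hmr : (m : ℕ) + 1 = σ c := by simp only [m]; omega
  have hmc : σ⁻¹ m < c := by simpa using hσ m (σ c) hmr hr.2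
  rw [Xmat_mulVec_single_of_add_one_eq hmr hr.2, ← σ.apply_symm_apply m, ← col_permMat]
  exact col_mem_spanCols _ (lt_trans (Fin.lt_def.mp hmc) hci)

theorem permutation_flag_in_springer_general
    (N n : ℕ) :
    (∀ σ : Equiv.Perm (Fin N),
      SpringerCond N n (permMat σ) ↔
        ((∀ r r' : Fin N, r < r' → (r' : ℕ) < n → σ⁻¹ r < σ⁻¹ r') ∧
         (∀ r r' : Fin N, n ≤ (r : ℕ) → r < r' → σ⁻¹ r < σ⁻¹ r'))) ∧
    (∀ (g : Matrix (Fin N) (Fin N) ℂ) (σ : Equiv.Perm (Fin N)),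
      IsUnit g → CanonicalWithPerm g σ → SpringerCond N n g →
        SpringerCond N n (permMat σ)) :=
  ⟨fun σ => (springerCond_permMat_iff σ).trans (ascendsAlongX_iff _),
    fun _ σ _ hg hs => (springerCond_permMat_iff σ).mpr (hg.hasPivots.ascendsAlongX hs)⟩

/-- Corollary 2.4.  A permutation flag lies in the Springer fiber iff the
pivots increase left-to-right within the first `n` rows and within the last `N-n` rows;
moreover the permutation flag of the pivots of any canonical-form matrix in the Springer fiber
again lies in the Springer fiber.  (Indices are 0-based: 1-based row `r+1`.) -/
theorem permutation_flag_in_springer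
    (N n : ℕ) (hn : 1 ≤ n) (hnN : n ≤ N - 1) :
    (∀ σ : Equiv.Perm (Fin N),
      SpringerCond N n (permMat σ) ↔
        ((∀ r r' : Fin N, r < r' → (r' : ℕ) < n → σ⁻¹ r < σ⁻¹ r') ∧
         (∀ r r' : Fin N, n ≤ (r : ℕ) → r < r' → σ⁻¹ r < σ⁻¹ r'))) ∧
    (∀ (g : Matrix (Fin N) (Fin N) ℂ) (σ : Equiv.Perm (Fin N)),
      IsUnit g → CanonicalWithPerm g σ → SpringerCond N n g →
        SpringerCond N n (permMat σ)) :=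
  permutation_flag_in_springer_general N n

end TwoRowSpringer
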